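/- Let G be a finite group and let i : V → X, j : X → Y, k : Y → Z be maps of finite G-sets. Suppose (h : A → V, a : A → B, m : B → Y) is a distributor for (i, j), and (c : C → B, q : C → D, r : D → Z) is a distributor for (m, k). Let Q := A ×_B C be the pullback of a and c, with projections g : Q → A and s : Q → C. Then (h ∘ g : Q → V, q ∘ s : Q → D, r : D → Z) is a distributor for (i, k ∘ j). -/

import Mathlib

/-!
A distributor for `(i, j)` identifies its top row with `Y ×_Z ∏_{i,j} X → ∏_{i,j} X`.
Once `B ≅ ∏_{i,j} V` over `Y`, a section of `m` over a fibre `k⁻¹(z)` is a family of sections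
of `i` over the fibres `j⁻¹(y)`, `y ∈ k⁻¹(z)`, i.e. one section of `i` over `(k ∘ j)⁻¹(z)`;
so `D ≅ ∏_{m,k} B ≅ ∏_{i,k∘j} V` over `Z`. Pasting pullbacks,
`A ×_B C ≅ X ×_Y B ×_B (Y ×_Z ∏_{m,k} B) ≅ X ×_Z ∏_{m,k} B ≅ X ×_Z ∏_{i,k∘j} V`,
and under these identifications evaluation of the glued section is evaluation in `A`.
-/

set_option autoImplicit false

namespace Tamb

variable {G : Type} [Group G]

/-- A function between `G`-sets is equivariant. -/
def IsEquivariant (G : Type) [Group G] {A B : Type} [SMul G A] [SMul G B] (f : A → B) : Prop :=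
  ∀ (g : G) (a : A), f (g • a) = g • f a

section Maps

variable {X Y Z : Type} [MulAction G X] [MulAction G Y] [MulAction G Z]

/-- The identity equivariant map. -/
def gid (G X : Type) [Group G] [MulAction G X] : X →[G] X :=
  ⟨fun x => x, fun _ _ => rfl⟩

@[simp] theorem gid_apply (x : X) : gid G X x = x := rfl

/-- Composition of equivariant maps. -/
def gcomp (j : Y →[G] Z) (i : X →[G] Y) : X →[G] Z :=
  ⟨fun x => j (i x), fun g x => by
    show j (i (g • x)) = g • j (i x)
    rw [MulActionHom.map_smul, MulActionHom.map_smul]⟩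

@[simp] theorem gcomp_apply (j : Y →[G] Z) (i : X →[G] Y) (x : X) : gcomp j i x = j (i x) := rfl

/-- The pullback of two equivariant maps of `G`-sets. -/
def Pb (f : X →[G] Z) (g : Y →[G] Z) : Type := {p : X × Y // f p.1 = g p.2}

namespace Pb

variable (f : X →[G] Z) (g : Y →[G] Z)

instance : SMul G (Pb f g) :=
  ⟨fun a p => ⟨(a • p.1.1, a • p.1.2), by
    rw [MulActionHom.map_smul, MulActionHom.map_smul, p.2]⟩⟩

instance : MulAction G (Pb f g) where
  one_smul p := Subtype.ext (Prod.ext (one_smul _ _) (one_smul _ _))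
  mul_smul a b p := Subtype.ext (Prod.ext (mul_smul _ _ _) (mul_smul _ _ _))

instance [Finite X] [Finite Y] : Finite (Pb f g) := Subtype.finite

/-- First projection of a pullback. -/
def fstHom : Pb f g →[G] X := ⟨fun p => p.1.1, fun _ _ => rfl⟩
/-- Second projection of a pullback. -/
def sndHom : Pb f g →[G] Y := ⟨fun p => p.1.2, fun _ _ => rfl⟩

@[simp] theorem fstHom_apply (p : Pb f g) : fstHom f g p = p.1.1 := rfl
@[simp] theorem sndHom_apply (p : Pb f g) : sndHom f g p = p.1.2 := rfl

end Pb

/-- `Sec i j` is the set `∏_{i,j} X` of sections of `i : X → Y` defined on fibers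
of `j : Y → Z`: an element is a point `z : Z` together with a section of `i`
defined on `j⁻¹(z)`. -/
structure Sec (i : X →[G] Y) (j : Y →[G] Z) where
  pt : Z
  sec : ∀ y : Y, j y = pt → X
  isSec : ∀ (y : Y) (h : j y = pt), i (sec y h) = y

namespace Sec

variable {i : X →[G] Y} {j : Y →[G] Z}

theorem ext' {σ τ : Sec i j} (h1 : σ.pt = τ.pt)
    (h2 : ∀ (y : Y) (h : j y = σ.pt) (h' : j y = τ.pt), σ.sec y h = τ.sec y h') : σ = τ := by
  obtain ⟨p, s, hs⟩ := σ
  obtain ⟨p', s', hs'⟩ := τ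
  dsimp at h1
  subst h1
  have hss : s = s' := by
    funext y hy
    exact h2 y hy hy
  subst hss
  rfl

theorem sec_congr (σ : Sec i j) {y y' : Y} (e : y = y') {h : j y = σ.pt} {h' : j y' = σ.pt} :
    σ.sec y h = σ.sec y' h' := by subst e; rfl

instance : SMul G (Sec i j) :=
  ⟨fun a σ =>
    { pt := a • σ.pt
      sec := fun y h => a • σ.sec (a⁻¹ • y) (by rw [MulActionHom.map_smul, h, inv_smul_smul])
      isSec := fun y h => by
        rw [MulActionHom.map_smul, σ.isSec, smul_inv_smul] }⟩

@[simp] theorem smul_pt (a : G) (σ : Sec i j) : (a • σ).pt = a • σ.pt := rfl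

theorem smul_sec (a : G) (σ : Sec i j) (y : Y) (h : j y = (a • σ).pt)
    (h' : j (a⁻¹ • y) = σ.pt) : (a • σ).sec y h = a • σ.sec (a⁻¹ • y) h' := rfl

instance : MulAction G (Sec i j) where
  one_smul σ := by
    refine ext' (one_smul _ _) (fun y h h' => ?_)
    have h'' : j ((1 : G)⁻¹ • y) = σ.pt := by rw [inv_one, one_smul]; exact h'
    rw [smul_sec 1 σ y h h'', one_smul]
    exact sec_congr σ (by rw [inv_one, one_smul])
  mul_smul a b σ := by
    refine ext' (mul_smul _ _ _) (fun y h h' => ?_)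
    have h1 : j ((a * b)⁻¹ • y) = σ.pt := by
      rw [MulActionHom.map_smul, h]
      exact inv_smul_smul _ _
    have h2 : j (a⁻¹ • y) = (b • σ).pt := by
      rw [MulActionHom.map_smul, h']
      show a⁻¹ • (a • (b • σ).pt) = _
      exact inv_smul_smul _ _
    have h3 : j (b⁻¹ • (a⁻¹ • y)) = σ.pt := by
      rw [MulActionHom.map_smul, h2]
      exact inv_smul_smul _ _
    rw [smul_sec (a * b) σ y h h1, smul_sec a (b • σ) y h' h2, smul_sec b σ (a⁻¹ • y) h2 h3,
      mul_smul]
    exact congrArg (a • ·) (congrArg (b • ·) (sec_congr σ (by rw [mul_inv_rev, mul_smul])))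

instance optionFinite {X : Type} [Finite X] : Finite (Option X) :=
  Finite.of_equiv (X ⊕ PUnit.{1}) (Equiv.optionEquivSumPUnit.{0,0} X).symm

instance [Finite X] [Finite Y] [Finite Z] : Finite (Sec i j) := by
  classical
  have hF : Function.Injective (fun σ : Sec i j =>
      ((σ.pt, fun y => if h : j y = σ.pt then some (σ.sec y h) else none) :
        Z × (Y → Option X))) := by
    intro σ τ he
    have h1 : σ.pt = τ.pt := congrArg Prod.fst he
    refine ext' h1 (fun y hy hy' => ?_)
    have h2 := congrFun (congrArg Prod.snd he) y
    dsimp only at h2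
    rw [dif_pos hy, dif_pos hy'] at h2
    exact Option.some_injective _ h2
  exact Finite.of_injective _ hF

end Sec

/-- The canonical projection `∏_{i,j} X → Z`. -/
def pHom (i : X →[G] Y) (j : Y →[G] Z) : Sec i j →[G] Z :=
  ⟨fun σ => σ.pt, fun _ _ => rfl⟩

@[simp] theorem pHom_apply (i : X →[G] Y) (j : Y →[G] Z) (σ : Sec i j) :
    pHom i j σ = σ.pt := rfl

/-- The canonical pullback `Y ×_Z ∏_{i,j} X`. -/
abbrev ECan (i : X →[G] Y) (j : Y →[G] Z) : Type := Pb j (pHom i j)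

/-- The evaluation map `e : Y ×_Z ∏_{i,j} X → X`. -/
def eval (i : X →[G] Y) (j : Y →[G] Z) : ECan i j → X := fun q => q.1.2.sec q.1.1 q.2

theorem eval_smul (i : X →[G] Y) (j : Y →[G] Z) (a : G) (q : ECan i j) :
    eval i j (a • q) = a • eval i j q := by
  have h1 : j (a • q.1.1) = (a • q.1.2).pt := by
    rw [MulActionHom.map_smul, q.2]; rfl
  have h2 : j (a⁻¹ • (a • q.1.1)) = q.1.2.pt := by rw [inv_smul_smul]; exact q.2
  calc eval i j (a • q) = (a • q.1.2).sec (a • q.1.1) h1 := rfl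
    _ = a • q.1.2.sec (a⁻¹ • (a • q.1.1)) h2 := Sec.smul_sec _ _ _ _ _
    _ = a • q.1.2.sec q.1.1 q.2 := congrArg (a • ·) (Sec.sec_congr _ (inv_smul_smul a q.1.1))

/-- The evaluation map as an equivariant map. -/
def evalHom (i : X →[G] Y) (j : Y →[G] Z) : ECan i j →[G] X :=
  ⟨eval i j, eval_smul i j⟩

/-- The projection `π₂ : Y ×_Z ∏_{i,j} X → ∏_{i,j} X` of the canonical exponential diagram. -/
def pi2Hom (i : X →[G] Y) (j : Y →[G] Z) : ECan i j →[G] Sec i j :=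
  Pb.sndHom j (pHom i j)

end Maps

/-- `(f, g, h)` is a distributor for `(i, j)`: the diagram with bottom row
`X →i Y →j Z`, top row `g : A → B`, left vertical `f : A → X` and right vertical
`h : B → Z` is an exponential diagram, i.e. it is isomorphic (by equivariant
bijections fixing the bottom row) to the canonical diagram built from `∏_{i,j} X`. -/
def IsDistributor {X Y Z A B : Type} [MulAction G X] [MulAction G Y] [MulAction G Z]
    [MulAction G A] [MulAction G B]
    (i : X →[G] Y) (j : Y →[G] Z) (f : A →[G] X) (g : A →[G] B) (h : B →[G] Z) : Prop :=
  ∃ (α : A ≃ ECan i j) (β : B ≃ Sec i j),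
    IsEquivariant G ⇑α ∧ IsEquivariant G ⇑β ∧
    (∀ a, eval i j (α a) = f a) ∧
    (∀ a, β (g a) = (α a).1.2) ∧
    (∀ b, (β b).pt = h b)

end Tamb

namespace Tamb

variable {G : Type} [Group G]

theorem IsEquivariant.comp {A B C : Type} [SMul G A] [SMul G B] [SMul G C] {f : A → B}
    {g : B → C} (hf : IsEquivariant G f) (hg : IsEquivariant G g) : IsEquivariant G (g ∘ f) :=
  fun a x => (congrArg g (hf a x)).trans (hg a (f x))

theorem IsEquivariant.symm {A B : Type} [SMul G A] [SMul G B] {e : A ≃ B}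
    (he : IsEquivariant G e) : IsEquivariant G e.symm :=
  fun a y => e.injective (by rw [he, Equiv.apply_symm_apply, Equiv.apply_symm_apply])

namespace Pb

variable {X Y Y' Z : Type} [MulAction G X] [MulAction G Y] [MulAction G Y'] [MulAction G Z]
  {f : X →[G] Z} {g : Y →[G] Z} {g' : Y' →[G] Z}

theorem ext {p p' : Pb f g} (h₁ : p.1.1 = p'.1.1) (h₂ : p.1.2 = p'.1.2) : p = p' :=
  Subtype.ext (Prod.ext h₁ h₂)

def congrRight (e : Y ≃ Y') (he : ∀ y, g' (e y) = g y) : Pb f g ≃ Pb f g' where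
  toFun p := ⟨(p.1.1, e p.1.2), p.2.trans (he _).symm⟩
  invFun p := ⟨(p.1.1, e.symm p.1.2), p.2.trans (by rw [← he, e.apply_symm_apply])⟩
  left_inv p := ext rfl (e.symm_apply_apply _)
  right_inv p := ext rfl (e.apply_symm_apply _)

theorem congrRight_equivariant {e : Y ≃ Y'} (he : ∀ y, g' (e y) = g y)
    (he' : IsEquivariant G e) : IsEquivariant G (congrRight (f := f) e he) :=
  fun a p => ext rfl (he' a p.1.2)

end Pb

namespace Sec

variable {V X Y Z B : Type} [MulAction G V] [MulAction G X] [MulAction G Y] [MulAction G Z]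
  [MulAction G B] {i : V →[G] X} {j : X →[G] Y} {k : Y →[G] Z} {m : B →[G] Y}

theorem congr_sec {σ τ : Sec i j} (e : σ = τ) {x x' : X} (ex : x = x') {h : j x = σ.pt}
    {h' : j x' = τ.pt} : σ.sec x h = τ.sec x' h' := by
  subst e ex; rfl

def restrict (ρ : Sec i (gcomp k j)) (y : Y) (hy : k y = ρ.pt) : Sec i j where
  pt := y
  sec x hx := ρ.sec x (by rw [gcomp_apply, hx, hy])
  isSec x _ := ρ.isSec x _

theorem restrict_smul (g : G) (ρ : Sec i (gcomp k j)) (y : Y) (hy : k y = (g • ρ).pt)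
    (hy' : k (g⁻¹ • y) = ρ.pt) : restrict (g • ρ) y hy = g • restrict ρ (g⁻¹ • y) hy' :=
  ext' (smul_inv_smul g y).symm fun _ _ _ => rfl

variable (β : B ≃ Sec i j) (hβ : ∀ b, (β b).pt = m b)

def glue (σ : Sec m k) : Sec i (gcomp k j) where
  pt := σ.pt
  sec x hx := (β (σ.sec (j x) hx)).sec x ((hβ _).trans (σ.isSec (j x) hx)).symm
  isSec x _ := (β _).isSec x _

def unglue (ρ : Sec i (gcomp k j)) : Sec m k where
  pt := ρ.pt
  sec y hy := β.symm (restrict ρ y hy)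
  isSec y hy := by rw [← hβ, β.apply_symm_apply]; rfl

def glueEquiv : Sec m k ≃ Sec i (gcomp k j) where
  toFun := glue β hβ
  invFun := unglue β hβ
  left_inv σ := by
    refine ext' rfl fun y _ _ => β.symm_apply_eq.mpr (ext' ?_ fun x _ _ => ?_)
    · rw [hβ, σ.isSec]; rfl
    · exact congr_sec (congrArg β (sec_congr σ ‹j x = y›)) rfl
  right_inv ρ :=
    ext' rfl fun x hx _ => congr_sec (h' := rfl) (β.apply_symm_apply (restrict ρ (j x) hx)) rfl

theorem unglue_equivariant (hβe : IsEquivariant G β) :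
    IsEquivariant G (unglue (k := k) β hβ) := by
  intro g ρ
  refine ext' rfl fun y hy _ => ?_
  show β.symm (restrict (g • ρ) y hy) = g • β.symm (restrict ρ (g⁻¹ • y) _)
  exact (congrArg β.symm (restrict_smul g ρ y hy _)).trans (hβe.symm g _)

theorem glueEquiv_equivariant (hβe : IsEquivariant G β) :
    IsEquivariant G (glueEquiv (k := k) β hβ) :=
  IsEquivariant.symm (e := (glueEquiv (k := k) β hβ).symm) (unglue_equivariant β hβ hβe)

end Sec

structure DistributorData {X Y Z A B : Type} [MulAction G X] [MulAction G Y] [MulAction G Z]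
    [MulAction G A] [MulAction G B]
    (i : X →[G] Y) (j : Y →[G] Z) (f : A →[G] X) (g : A →[G] B) (h : B →[G] Z) where
  α : A ≃ ECan i j
  β : B ≃ Sec i j
  α_equivariant : IsEquivariant G α
  β_equivariant : IsEquivariant G β
  eval_α : ∀ x, eval i j (α x) = f x
  β_apply : ∀ x, β (g x) = (α x).1.2
  β_pt : ∀ b, (β b).pt = h b

theorem isDistributor_iff_nonempty {X Y Z A B : Type} [MulAction G X] [MulAction G Y]
    [MulAction G Z] [MulAction G A] [MulAction G B]
    {i : X →[G] Y} {j : Y →[G] Z} {f : A →[G] X} {g : A →[G] B} {h : B →[G] Z} :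
    IsDistributor i j f g h ↔ Nonempty (DistributorData i j f g h) :=
  ⟨fun ⟨α, β, hα, hβ, hf, hg, hh⟩ => ⟨⟨α, β, hα, hβ, hf, hg, hh⟩⟩,
    fun ⟨⟨α, β, hα, hβ, hf, hg, hh⟩⟩ => ⟨α, β, hα, hβ, hf, hg, hh⟩⟩

namespace DistributorData

variable {V X Y Z A B C D : Type} [MulAction G V] [MulAction G X] [MulAction G Y]
  [MulAction G Z] [MulAction G A] [MulAction G B] [MulAction G C] [MulAction G D]
  {i : V →[G] X} {j : X →[G] Y} {k : Y →[G] Z} {h : A →[G] V} {a : A →[G] B} {m : B →[G] Y}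
  {c : C →[G] B} {q : C →[G] D} {r : D →[G] Z}
  (d₁ : DistributorData i j h a m) (d₂ : DistributorData m k c q r)

theorem fiber_eq (p : Pb a c) : j (d₁.α p.1.1).1.1 = (d₂.α p.1.2).1.1 := by
  rw [(d₁.α p.1.1).2, pHom_apply, ← d₁.β_apply, d₁.β_pt, p.2, ← d₂.eval_α]
  exact (d₂.α p.1.2).1.2.isSec _ _

theorem β_sec_fiber (p : Pb a c) (hp : k (j (d₁.α p.1.1).1.1) = (d₂.α p.1.2).1.2.pt) :
    d₁.β ((d₂.α p.1.2).1.2.sec (j (d₁.α p.1.1).1.1) hp) = (d₁.α p.1.1).1.2 := by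
  rw [Sec.sec_congr _ (fiber_eq d₁ d₂ p), ← d₁.β_apply, p.2, ← d₂.eval_α]
  rfl

theorem a_α_symm_eq_c_α_symm (x : X) (σ : Sec m k) (hx : k (j x) = σ.pt) :
    a (d₁.α.symm ⟨(x, d₁.β (σ.sec (j x) hx)), ((d₁.β_pt _).trans (σ.isSec _ _)).symm⟩) =
      c (d₂.α.symm ⟨(j x, σ), hx⟩) :=
  d₁.β.injective <| (d₁.β_apply _).trans <| (congrArg (·.1.2) (d₁.α.apply_symm_apply _)).trans <|
    congrArg d₁.β <|
      (congrArg (eval m k) (d₂.α.apply_symm_apply ⟨(j x, σ), hx⟩)).symm.trans (d₂.eval_α _)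

def pullbackEquiv : Pb a c ≃ Pb (gcomp k j) (pHom m k) where
  toFun p := ⟨((d₁.α p.1.1).1.1, (d₂.α p.1.2).1.2), by
    rw [gcomp_apply, fiber_eq d₁ d₂ p]; exact (d₂.α p.1.2).2⟩
  invFun w := ⟨(_, _), a_α_symm_eq_c_α_symm d₁ d₂ w.1.1 w.1.2 w.2⟩
  left_inv p := Pb.ext
    (d₁.α.symm_apply_eq.mpr (Pb.ext rfl (β_sec_fiber d₁ d₂ p _)))
    (d₂.α.symm_apply_eq.mpr (Pb.ext (fiber_eq d₁ d₂ p) rfl))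
  right_inv w := Pb.ext
    (congrArg (·.1.1) (d₁.α.apply_symm_apply _)) (congrArg (·.1.2) (d₂.α.apply_symm_apply _))

theorem pullbackEquiv_equivariant : IsEquivariant G (pullbackEquiv d₁ d₂) := fun g p =>
  Pb.ext (congrArg (·.1.1) (d₁.α_equivariant g p.1.1))
    (congrArg (·.1.2) (d₂.α_equivariant g p.1.2))

def comp :
    DistributorData i (gcomp k j) (gcomp h (Pb.fstHom a c)) (gcomp q (Pb.sndHom a c)) r where
  α := (pullbackEquiv d₁ d₂).trans (Pb.congrRight (Sec.glueEquiv d₁.β d₁.β_pt) fun _ => rfl)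
  β := d₂.β.trans (Sec.glueEquiv d₁.β d₁.β_pt)
  α_equivariant := (pullbackEquiv_equivariant d₁ d₂).comp <| Pb.congrRight_equivariant
    (fun _ => rfl) (Sec.glueEquiv_equivariant d₁.β d₁.β_pt d₁.β_equivariant)
  β_equivariant :=
    d₂.β_equivariant.comp (Sec.glueEquiv_equivariant d₁.β d₁.β_pt d₁.β_equivariant)
  eval_α p :=
    (Sec.congr_sec (h' := (d₁.α p.1.1).2) (β_sec_fiber d₁ d₂ p _) rfl).trans (d₁.eval_α p.1.1)
  β_apply p := congrArg (Sec.glue d₁.β d₁.β_pt) (d₂.β_apply p.1.2)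
  β_pt := d₂.β_pt

end DistributorData

theorem statement2_general
    {V X Y Z A B C D : Type}
    [MulAction G V] [MulAction G X] [MulAction G Y] [MulAction G Z]
    [MulAction G A] [MulAction G B] [MulAction G C] [MulAction G D]
    (i : V →[G] X) (j : X →[G] Y) (k : Y →[G] Z)
    (h : A →[G] V) (a : A →[G] B) (m : B →[G] Y)
    (hdist1 : IsDistributor i j h a m)
    (c : C →[G] B) (q : C →[G] D) (r : D →[G] Z)
    (hdist2 : IsDistributor m k c q r) :
    IsDistributor i (gcomp k j) (gcomp h (Pb.fstHom a c)) (gcomp q (Pb.sndHom a c)) r := by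
  obtain ⟨d₁⟩ := isDistributor_iff_nonempty.mp hdist1
  obtain ⟨d₂⟩ := isDistributor_iff_nonempty.mp hdist2
  exact isDistributor_iff_nonempty.mpr ⟨d₁.comp d₂⟩

/-- functoriality of the norm, Lemma `functorialnorm`.
Given `i : V → X`, `j : X → Y`, `k : Y → Z` in `Fin_G`, a distributor `(h, a, m)` for
`(i, j)`, a distributor `(c, q, r)` for `(m, k)`, and the pullback `Q := A ×_B C` of
`a` and `c` (with projections `g = fst : Q → A` and `s = snd : Q → C`), the triple
`(h ∘ g, q ∘ s, r)` is a distributor for `(i, k ∘ j)`. -/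
theorem statement2 [Finite G]
    {V X Y Z A B C D : Type}
    [MulAction G V] [MulAction G X] [MulAction G Y] [MulAction G Z]
    [MulAction G A] [MulAction G B] [MulAction G C] [MulAction G D]
    [Finite V] [Finite X] [Finite Y] [Finite Z] [Finite A] [Finite B] [Finite C] [Finite D]
    (i : V →[G] X) (j : X →[G] Y) (k : Y →[G] Z)
    (h : A →[G] V) (a : A →[G] B) (m : B →[G] Y)
    (hdist1 : IsDistributor i j h a m)
    (c : C →[G] B) (q : C →[G] D) (r : D →[G] Z)
    (hdist2 : IsDistributor m k c q r) :
    IsDistributor i (gcomp k j) (gcomp h (Pb.fstHom a c)) (gcomp q (Pb.sndHom a c)) r :=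
  statement2_general i j k h a m hdist1 c q r hdist2

end Tamb
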